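/- If V : ℝⁿ → ℝ is continuous and V(x) ≥ C|x|^N for all |x| ≥ R (some constants C > 0, R > 0, N > 0), then there exist C' > 0 and R' > 0 such that V^ave(z) ≥ C'|z|^N for all z ∈ ℂⁿ with |z| ≥ R'. -/

import Mathlib

open scoped Real

/-- The harmonic-oscillator average of `V : ℝⁿ → ℝ` in complex phase-space
coordinates `z = x + ip`. -/
noncomputable def ave (n : ℕ) (V : (Fin n → ℝ) → ℝ) (z : Fin n → ℂ) : ℝ :=
  (1 / (2 * Real.pi)) *
    ∫ t in (0:ℝ)..(2 * Real.pi), V (fun j => (Complex.exp (Complex.I * t) * z j).re)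

/-!
On the compact ball `|x| ≤ R` the continuous `V` is bounded below, so `V x ≥ C |x|^N - K`
everywhere. Along the orbit `x_t = Re (e^{it} z)` one has `|x_t|² + |x_{t+π/2}|² = |z|²`, so one of
the two points satisfies `|x| ≥ |z| / √2` and `V x_t + V x_{t+π/2} ≥ C (|z| / √2)^N - 2K`. As
`t ↦ V x_t` is `2π`-periodic, both terms have the same integral over a period, whence
`V^ave z ≥ C/2 (|z| / √2)^N - K`, which beats `C' |z|^N` for `|z|` large.
-/

theorem exists_forall_sub_le_of_isCompact {X : Type*} [TopologicalSpace X] {V f : X → ℝ}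
    {s : Set X} (hs : IsCompact s) (hV : ContinuousOn V s) (hf : BddAbove (f '' s))
    (h : ∀ x ∉ s, f x ≤ V x) : ∃ K, ∀ x, f x - K ≤ V x := by
  obtain ⟨m, hm⟩ := hs.bddBelow_image hV
  obtain ⟨M, hM⟩ := hf
  refine ⟨max (M - m) 0, fun x => ?_⟩
  by_cases hx : x ∈ s
  · linarith [hm ⟨x, hx, rfl⟩, hM ⟨x, hx, rfl⟩, le_max_left (M - m) 0]
  · linarith [h x hx, le_max_right (M - m) 0]

theorem isCompact_setOf_sqrt_sum_sq_le (n : ℕ) (R : ℝ) :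
    IsCompact {x : Fin n → ℝ | √(∑ j, x j ^ 2) ≤ R} := by
  convert (EuclideanSpace.equiv (Fin n) ℝ).symm.toHomeomorph.isCompact_preimage.2
    (isCompact_closedBall (0 : EuclideanSpace ℝ (Fin n)) R) using 1
  ext x
  simp [EuclideanSpace.norm_eq]

theorem rpow_div_sqrt_two_le_rpow_add_rpow {a b s N : ℝ} (ha : 0 ≤ a) (hb : 0 ≤ b) (hs : 0 ≤ s)
    (hN : 0 ≤ N) (habs : a ^ 2 + b ^ 2 = s ^ 2) : (s / √2) ^ N ≤ a ^ N + b ^ N := by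
  have hmax : s / √2 ≤ max a b := by
    rw [div_le_iff₀ (by positivity), ← pow_le_pow_iff_left₀ hs (by positivity) two_ne_zero,
      mul_pow, Real.sq_sqrt zero_le_two]
    nlinarith [le_max_left a b, le_max_right a b]
  refine (Real.rpow_le_rpow (by positivity) hmax hN).trans ?_
  rcases le_total a b with hab | hab
  · rw [max_eq_right hab]
    exact le_add_of_nonneg_left (Real.rpow_nonneg ha N)
  · rw [max_eq_left hab]
    exact le_add_of_nonneg_right (Real.rpow_nonneg hb N)

theorem Function.Periodic.mul_le_two_mul_intervalIntegral {g : ℝ → ℝ} {T a m : ℝ}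
    (hg : Function.Periodic g T) (hcont : Continuous g) (hT : 0 ≤ T)
    (h : ∀ t, m ≤ g t + g (t + a)) : T * m ≤ 2 * ∫ t in 0..T, g t := by
  have hcont' : Continuous fun t => g (t + a) := hcont.comp (continuous_add_const a)
  have hshift : ∫ t in 0..T, g (t + a) = ∫ t in 0..T, g t := by
    rw [intervalIntegral.integral_comp_add_right, zero_add, add_comm T a,
      hg.intervalIntegral_add_eq a 0, zero_add]
  calc T * m = ∫ _ in 0..T, m := by simp
    _ ≤ ∫ t in 0..T, (g t + g (t + a)) :=
      intervalIntegral.integral_mono_on hT intervalIntegrable_const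
        ((hcont.add hcont').intervalIntegrable _ _) fun t _ => h t
    _ = 2 * ∫ t in 0..T, g t := by
      rw [intervalIntegral.integral_add (hcont.intervalIntegrable _ _)
        (hcont'.intervalIntegrable _ _), hshift, two_mul]

noncomputable def oscillatorOrbit {n : ℕ} (z : Fin n → ℂ) (t : ℝ) : Fin n → ℝ :=
  fun j => (Complex.exp (Complex.I * t) * z j).re

theorem continuous_oscillatorOrbit {n : ℕ} (z : Fin n → ℂ) : Continuous (oscillatorOrbit z) := by
  unfold oscillatorOrbit
  fun_prop

theorem periodic_oscillatorOrbit {n : ℕ} (z : Fin n → ℂ) :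
    Function.Periodic (oscillatorOrbit z) (2 * π) := fun t => by
  have : Complex.I * ↑(t + 2 * π) = Complex.I * t + 2 * π * Complex.I := by push_cast; ring
  unfold oscillatorOrbit
  rw [this, Complex.exp_periodic]

theorem sum_sq_oscillatorOrbit_add_sum_sq_oscillatorOrbit_add_pi_div_two {n : ℕ}
    (z : Fin n → ℂ) (t : ℝ) :
    ∑ j, oscillatorOrbit z t j ^ 2 + ∑ j, oscillatorOrbit z (t + π / 2) j ^ 2
      = ∑ j, ‖z j‖ ^ 2 := by
  have hquarter :
      Complex.exp (Complex.I * ↑(t + π / 2)) = Complex.I * Complex.exp (Complex.I * t) := by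
    rw [Complex.ofReal_add, mul_add, Complex.exp_add, mul_comm, mul_comm Complex.I (π / 2 : ℝ)]
    push_cast
    rw [Complex.exp_pi_div_two_mul_I]
  rw [← Finset.sum_add_distrib]
  refine Finset.sum_congr rfl fun j _ => ?_
  simp only [oscillatorOrbit, hquarter, mul_assoc, Complex.I_mul_re, neg_sq]
  have hnorm : ‖Complex.exp (Complex.I * t) * z j‖ = ‖z j‖ := by
    rw [norm_mul, Complex.norm_exp_I_mul_ofReal, one_mul]
  rw [← hnorm, Complex.sq_norm, Complex.normSq_apply]
  ring

theorem le_ave_of_forall_sub_le {n : ℕ} {V : (Fin n → ℝ) → ℝ} (hV : Continuous V) {C K N : ℝ}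
    (hC : 0 ≤ C) (hN : 0 ≤ N) (hVK : ∀ x, C * √(∑ j, x j ^ 2) ^ N - K ≤ V x) (z : Fin n → ℂ) :
    C / 2 * (√(∑ j, ‖z j‖ ^ 2) / √2) ^ N - K ≤ ave n V z := by
  have hpair : ∀ t, C * (√(∑ j, ‖z j‖ ^ 2) / √2) ^ N - 2 * K ≤
      V (oscillatorOrbit z t) + V (oscillatorOrbit z (t + π / 2)) := by
    intro t
    have hsq : ∀ x : Fin n → ℝ, √(∑ j, x j ^ 2) ^ 2 = ∑ j, x j ^ 2 := fun x =>
      Real.sq_sqrt (Finset.sum_nonneg fun _ _ => sq_nonneg _)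
    have hrpow := rpow_div_sqrt_two_le_rpow_add_rpow
      (Real.sqrt_nonneg (∑ j, oscillatorOrbit z t j ^ 2))
      (Real.sqrt_nonneg (∑ j, oscillatorOrbit z (t + π / 2) j ^ 2))
      (Real.sqrt_nonneg (∑ j, ‖z j‖ ^ 2)) hN
      (by rw [hsq, hsq, hsq]
          exact sum_sq_oscillatorOrbit_add_sum_sq_oscillatorOrbit_add_pi_div_two z t)
    nlinarith [hVK (oscillatorOrbit z t), hVK (oscillatorOrbit z (t + π / 2))]
  have hint := ((periodic_oscillatorOrbit z).comp V).mul_le_two_mul_intervalIntegral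
    (hV.comp (continuous_oscillatorOrbit z)) Real.two_pi_pos.le hpair
  change _ ≤ 1 / (2 * π) * ∫ t in 0..2 * π, (V ∘ oscillatorOrbit z) t
  rw [one_div_mul_eq_div, le_div_iff₀ Real.two_pi_pos]
  linarith

theorem exists_forall_half_mul_rpow_le_mul_rpow_sub {c K N : ℝ} (hc : 0 < c) (hN : 0 < N) :
    ∃ R > 0, ∀ s ≥ R, c / 2 * s ^ N ≤ c * s ^ N - K := by
  obtain ⟨R, hR⟩ := Filter.eventually_atTop.1
    ((tendsto_rpow_atTop hN).eventually_ge_atTop (2 * K / c))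
  refine ⟨max R 1, by positivity, fun s hs => ?_⟩
  have := hR s (le_of_max_le_left hs)
  rw [div_le_iff₀ hc] at this
  linarith

theorem average_lower_bound_general (n : ℕ) (V : (Fin n → ℝ) → ℝ) (hV : Continuous V)
    (C R N : ℝ) (hC : 0 < C) (hN : 0 < N)
    (hlow : ∀ x : Fin n → ℝ, R ≤ Real.sqrt (∑ j, x j ^ 2) →
      C * (Real.sqrt (∑ j, x j ^ 2)) ^ N ≤ V x) :
    ∃ C' > (0:ℝ), ∃ R' > (0:ℝ), ∀ z : Fin n → ℂ,
      R' ≤ Real.sqrt (∑ j, ‖z j‖ ^ 2) →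
      C' * (Real.sqrt (∑ j, ‖z j‖ ^ 2)) ^ N ≤ ave n V z := by
  have hbdd : BddAbove ((fun x : Fin n → ℝ => C * √(∑ j, x j ^ 2) ^ N) ''
      {x | √(∑ j, x j ^ 2) ≤ R}) := by
    refine ⟨C * R ^ N, ?_⟩
    rintro _ ⟨x, hx, rfl⟩
    exact mul_le_mul_of_nonneg_left (Real.rpow_le_rpow (Real.sqrt_nonneg _) hx hN.le) hC.le
  obtain ⟨K, hK⟩ := exists_forall_sub_le_of_isCompact (isCompact_setOf_sqrt_sum_sq_le n R)
    hV.continuousOn hbdd fun x hx => hlow x (not_le.1 hx).le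
  obtain ⟨R', hR', hlarge⟩ := exists_forall_half_mul_rpow_le_mul_rpow_sub (K := K)
    (by positivity : 0 < C / (2 * √2 ^ N)) hN
  refine ⟨C / (2 * √2 ^ N) / 2, by positivity, R', hR', fun z hz => (hlarge _ hz).trans ?_⟩
  calc _ = C / 2 * (√(∑ j, ‖z j‖ ^ 2) / √2) ^ N - K := by
        rw [Real.div_rpow (Real.sqrt_nonneg _) (Real.sqrt_nonneg 2)]
        ring
    _ ≤ ave n V z := le_ave_of_forall_sub_le hV hC.le hN.le hK z

/-- If `V` is continuous and `V(x) ≥ C|x|^N` for `|x| ≥ R`, then there are `C' > 0`,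
`R' > 0` with `V^ave(z) ≥ C'|z|^N` for `|z| ≥ R'`. -/
theorem average_lower_bound (n : ℕ) (V : (Fin n → ℝ) → ℝ) (hV : Continuous V)
    (C R N : ℝ) (hC : 0 < C) (hR : 0 < R) (hN : 0 < N)
    (hlow : ∀ x : Fin n → ℝ, R ≤ Real.sqrt (∑ j, x j ^ 2) →
      C * (Real.sqrt (∑ j, x j ^ 2)) ^ N ≤ V x) :
    ∃ C' > (0:ℝ), ∃ R' > (0:ℝ), ∀ z : Fin n → ℂ,
      R' ≤ Real.sqrt (∑ j, ‖z j‖ ^ 2) →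
      C' * (Real.sqrt (∑ j, ‖z j‖ ^ 2)) ^ N ≤ ave n V z :=
  average_lower_bound_general n V hV C R N hC hN hlow
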